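/- (Euclidean tail bound for the discrete Gaussian) For every integer n ≥ 1, every real R > 0, and every u ≥ 0, the discrete Gaussian γ_R on ℤⁿ satisfies γ_R({x ∈ ℤⁿ : ‖x‖₂ > u}) ≤ (√2)ⁿ · exp(−π·u²/(2R²)). -/

import Mathlib

/-!
On the tail `‖x‖ > u` one of the two factors of `exp(-π‖x‖²/R²) = exp(-π‖x‖²/2R²)²` is at most
`exp(-πu²/2R²)`, so the tail mass is at most `exp(-πu²/2R²) · ρ_{√2R}(ℤⁿ) / ρ_R(ℤⁿ)`. Both Gaussian
masses factor over the coordinates, and on `ℤ` Poisson summation `ρ_s(ℤ) = s · ρ_{1/s}(ℤ)`, with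
`ρ` increasing in the width, gives `ρ_{cs}(ℤ) ≤ c · ρ_s(ℤ)` for `c ≥ 1`.
-/

open scoped BigOperators

noncomputable section

/-- Euclidean norm of a real vector. -/
def l2 {m : ℕ} (x : Fin m → ℝ) : ℝ := Real.sqrt (∑ i, x i ^ 2)

/-- Euclidean norm of an integer vector. -/
def l2Z {m : ℕ} (x : Fin m → ℤ) : ℝ := l2 (fun i => (x i : ℝ))

/-- The torus norm: distance from a representative `ζ` of a point of
`𝕋ⁿ = (ℝ/ℤ)ⁿ` to the nearest point of the integer lattice `ℤⁿ`. -/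
def tnorm {m : ℕ} (ζ : Fin m → ℝ) : ℝ := ⨅ z : Fin m → ℤ, l2 (fun i => ζ i - z i)

/-- The discrete Gaussian probability mass function of radius `R` on `ℤⁿ`:
`γ_R(x) = exp(-π‖x‖²/R²) / ∑_y exp(-π‖y‖²/R²)`. -/
def dgauss (n : ℕ) (R : ℝ) (x : Fin n → ℤ) : ℝ :=
  Real.exp (-Real.pi * l2Z x ^ 2 / R ^ 2) /
    ∑' y : Fin n → ℤ, Real.exp (-Real.pi * l2Z y ^ 2 / R ^ 2)

/-- `μ` is a probability mass function on `ℤⁿ`. -/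
def IsPMF {n : ℕ} (μ : (Fin n → ℤ) → ℝ) : Prop := (∀ x, 0 ≤ μ x) ∧ HasSum μ 1

/-- The pairing `⟨ζ, x⟩ = ∑ i, ζ i * x i` of a torus representative and a lattice point. -/
def pair {n : ℕ} (ζ : Fin n → ℝ) (x : Fin n → ℤ) : ℝ := ∑ i, ζ i * (x i : ℝ)

/-- The Fourier transform `μ̂(ζ) = ∑ₓ μ(x)·exp(-2πi⟨ζ,x⟩)` of `μ : ℤⁿ → ℝ`,
evaluated at a representative of a torus point. -/
def ft {n : ℕ} (μ : (Fin n → ℤ) → ℝ) (ζ : Fin n → ℝ) : ℂ :=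
  ∑' x : Fin n → ℤ, (μ x : ℂ) * Complex.exp (-(2 * (Real.pi : ℂ) * Complex.I) * (pair ζ x : ℂ))

open Real

/-- `ρ_s(ℤ)`, the Gaussian mass of the integers at width `s`. -/
def rhoInt (s : ℝ) : ℝ := ∑' k : ℤ, exp (-π * (k : ℝ) ^ 2 / s ^ 2)

lemma summable_exp_neg_pi_mul_int_sq_div {s : ℝ} (hs : s ≠ 0) :
    Summable fun k : ℤ => exp (-π * (k : ℝ) ^ 2 / s ^ 2) := by
  have hτ : 0 < (((s ^ 2)⁻¹ : ℝ) * Complex.I).im := by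
    rw [Complex.im_ofReal_mul, Complex.I_im, mul_one]; positivity
  convert ((summable_jacobiTheta₂_term_iff 0 _).mpr hτ).norm using 2 with k
  rw [norm_jacobiTheta₂_term, Complex.im_ofReal_mul, Complex.I_im, Complex.zero_im]
  ring_nf

lemma hasSum_prod_pi_pow {β : Type*} {f : β → ℝ} {a : ℝ} (hf0 : 0 ≤ f) (hf : HasSum f a)
    (n : ℕ) : HasSum (fun x : Fin n → β => ∏ i, f (x i)) (a ^ n) := by
  induction n with
  | zero => simp
  | succ n ih =>
    set g : (Fin n → β) → ℝ := fun x => ∏ i, f (x i)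
    have hg0 : 0 ≤ g := fun x => Finset.prod_nonneg fun _ _ => hf0 _
    have hmul : HasSum (fun p : β × (Fin n → β) => f p.1 * g p.2) (a * a ^ n) :=
      hf.mul ih (hf.summable.mul_of_nonneg ih.summable hf0 hg0)
    rw [pow_succ', ← (Fin.consEquiv fun _ => β).hasSum_iff]
    convert hmul using 2 with p
    simp [Fin.consEquiv, Fin.prod_univ_succ, g]

lemma rhoInt_pos {s : ℝ} (hs : s ≠ 0) : 0 < rhoInt s :=
  (summable_exp_neg_pi_mul_int_sq_div hs).tsum_pos (fun _ => (exp_pos _).le) 0 (exp_pos _)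

lemma rhoInt_le_rhoInt {s t : ℝ} (hs : 0 < s) (hst : s ≤ t) : rhoInt s ≤ rhoInt t := by
  refine (summable_exp_neg_pi_mul_int_sq_div hs.ne').tsum_le_tsum (fun k => ?_)
    (summable_exp_neg_pi_mul_int_sq_div (hs.trans_le hst).ne')
  rw [exp_le_exp, neg_mul, neg_div, neg_div, neg_le_neg_iff]
  gcongr

/-- Jacobi's theta transformation (Poisson summation), written in terms of widths. -/
lemma rhoInt_eq_mul_rhoInt_inv {s : ℝ} (hs : 0 < s) : rhoInt s = s * rhoInt s⁻¹ := by
  have h := Real.tsum_exp_neg_mul_int_sq (inv_pos.2 (pow_pos hs 2))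
  rw [← sqrt_eq_rpow, sqrt_inv, sqrt_sq hs.le, one_div, inv_inv] at h
  have e1 (k : ℤ) : -π * (k : ℝ) ^ 2 / s ^ 2 = -π * (s ^ 2)⁻¹ * k ^ 2 := by ring
  have e2 (k : ℤ) : -π * (k : ℝ) ^ 2 / s⁻¹ ^ 2 = -π / (s ^ 2)⁻¹ * k ^ 2 := by ring
  simp only [rhoInt, e1, e2]
  exact h

lemma rhoInt_mul_le {s c : ℝ} (hs : 0 < s) (hc : 1 ≤ c) : rhoInt (c * s) ≤ c * rhoInt s := by
  have hcs : 0 < c * s := by positivity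
  calc rhoInt (c * s) = c * s * rhoInt (c * s)⁻¹ := rhoInt_eq_mul_rhoInt_inv hcs
    _ ≤ c * s * rhoInt s⁻¹ := by
      gcongr
      exact rhoInt_le_rhoInt (by positivity) (inv_anti₀ hs (le_mul_of_one_le_left hs.le hc))
    _ = c * rhoInt s := by rw [mul_assoc, ← rhoInt_eq_mul_rhoInt_inv hs]

lemma l2Z_sq {m : ℕ} (x : Fin m → ℤ) : l2Z x ^ 2 = ∑ i, (x i : ℝ) ^ 2 :=
  sq_sqrt (Finset.sum_nonneg fun _ _ => sq_nonneg _)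

lemma hasSum_exp_neg_pi_mul_l2Z_sq_div {s : ℝ} (hs : s ≠ 0) (n : ℕ) :
    HasSum (fun x : Fin n → ℤ => exp (-π * l2Z x ^ 2 / s ^ 2)) (rhoInt s ^ n) := by
  have h : HasSum (fun x : Fin n → ℤ => ∏ i, exp (-π * (x i : ℝ) ^ 2 / s ^ 2)) (rhoInt s ^ n) :=
    hasSum_prod_pi_pow (fun _ => (exp_pos _).le) (summable_exp_neg_pi_mul_int_sq_div hs).hasSum n
  convert h using 1
  funext x
  rw [← exp_sum, l2Z_sq, Finset.mul_sum, Finset.sum_div]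

lemma dgauss_eq {n : ℕ} {R : ℝ} (hR : R ≠ 0) (x : Fin n → ℤ) :
    dgauss n R x = exp (-π * l2Z x ^ 2 / R ^ 2) / rhoInt R ^ n := by
  rw [dgauss, (hasSum_exp_neg_pi_mul_l2Z_sq_div hR n).tsum_eq]

lemma dgauss_nonneg (n : ℕ) (R : ℝ) (x : Fin n → ℤ) : 0 ≤ dgauss n R x :=
  div_nonneg (exp_pos _).le (tsum_nonneg fun _ => (exp_pos _).le)

lemma exp_neg_pi_sq_div_le_mul {u t : ℝ} (hu : 0 ≤ u) (hut : u ≤ t) (R : ℝ) :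
    exp (-π * t ^ 2 / R ^ 2) ≤ exp (-π * u ^ 2 / (2 * R ^ 2)) * exp (-π * t ^ 2 / (2 * R ^ 2)) := by
  rw [← exp_add, exp_le_exp]
  have hsq : π * u ^ 2 / (2 * R ^ 2) ≤ π * t ^ 2 / (2 * R ^ 2) := by gcongr
  have hsplit : π * t ^ 2 / R ^ 2 = π * t ^ 2 / (2 * R ^ 2) + π * t ^ 2 / (2 * R ^ 2) := by
    rw [← add_div, ← two_mul, mul_div_mul_left _ _ two_ne_zero]
  rw [neg_mul, neg_mul, neg_div, neg_div, neg_div, hsplit]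
  linarith

lemma tsum_dgauss_tail_le {n : ℕ} {R u : ℝ} (hR : R ≠ 0) (hu : 0 ≤ u) :
    (∑' x : Fin n → ℤ, if u < l2Z x then dgauss n R x else 0)
      ≤ exp (-π * u ^ 2 / (2 * R ^ 2)) / rhoInt R ^ n * rhoInt (√2 * R) ^ n := by
  have hN : 0 < rhoInt R ^ n := pow_pos (rhoInt_pos hR) n
  set c := exp (-π * u ^ 2 / (2 * R ^ 2)) / rhoInt R ^ n
  have hwide : HasSum (fun x : Fin n → ℤ => exp (-π * l2Z x ^ 2 / (2 * R ^ 2)))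
      (rhoInt (√2 * R) ^ n) := by
    simpa [mul_pow] using hasSum_exp_neg_pi_mul_l2Z_sq_div (by positivity : √2 * R ≠ 0) n
  have htail (x : Fin n → ℤ) :
      (if u < l2Z x then dgauss n R x else 0) ≤ c * exp (-π * l2Z x ^ 2 / (2 * R ^ 2)) := by
    rw [dgauss_eq hR]
    split_ifs with hx
    · rw [div_mul_eq_mul_div]
      gcongr
      exact exp_neg_pi_sq_div_le_mul hu hx.le R
    · positivity
  have hdom := hwide.summable.mul_left c
  have hsum : Summable fun x : Fin n → ℤ => if u < l2Z x then dgauss n R x else 0 := by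
    refine .of_nonneg_of_le (fun x => ?_) htail hdom
    split_ifs
    exacts [dgauss_nonneg n R x, le_rfl]
  calc (∑' x : Fin n → ℤ, if u < l2Z x then dgauss n R x else 0)
      ≤ ∑' x : Fin n → ℤ, c * exp (-π * l2Z x ^ 2 / (2 * R ^ 2)) := hsum.tsum_le_tsum htail hdom
    _ = c * rhoInt (√2 * R) ^ n := by rw [tsum_mul_left, hwide.tsum_eq]

theorem discrete_gaussian_tail_general
    (n : ℕ) (R : ℝ) (hR : 0 < R) (u : ℝ) (hu : 0 ≤ u) :
    (∑' x : Fin n → ℤ, if u < l2Z x then dgauss n R x else 0)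
      ≤ Real.sqrt 2 ^ n * Real.exp (-Real.pi * u ^ 2 / (2 * R ^ 2)) := by
  have hN : 0 < rhoInt R ^ n := pow_pos (rhoInt_pos hR.ne') n
  have hrho : rhoInt (√2 * R) ^ n ≤ √2 ^ n * rhoInt R ^ n := by
    rw [← mul_pow]
    exact pow_le_pow_left₀ (rhoInt_pos (by positivity)).le
      (rhoInt_mul_le hR one_lt_sqrt_two.le) n
  calc (∑' x : Fin n → ℤ, if u < l2Z x then dgauss n R x else 0)
      ≤ exp (-π * u ^ 2 / (2 * R ^ 2)) / rhoInt R ^ n * rhoInt (√2 * R) ^ n :=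
        tsum_dgauss_tail_le hR.ne' hu
    _ ≤ exp (-π * u ^ 2 / (2 * R ^ 2)) / rhoInt R ^ n * (√2 ^ n * rhoInt R ^ n) :=
        mul_le_mul_of_nonneg_left hrho (by positivity)
    _ = √2 ^ n * exp (-π * u ^ 2 / (2 * R ^ 2)) := by
        rw [mul_left_comm, div_mul_cancel₀ _ hN.ne']

/-- **Euclidean tail bound for the discrete Gaussian** (equation (4.1)):
`γ_R({x : ‖x‖₂ > u}) ≤ (√2)ⁿ · exp(-πu²/(2R²))`. -/
theorem discrete_gaussian_tail
    (n : ℕ) (hn : 1 ≤ n) (R : ℝ) (hR : 0 < R) (u : ℝ) (hu : 0 ≤ u) :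
    (∑' x : Fin n → ℤ, if u < l2Z x then dgauss n R x else 0)
      ≤ Real.sqrt 2 ^ n * Real.exp (-Real.pi * u ^ 2 / (2 * R ^ 2)) :=
  discrete_gaussian_tail_general n R hR u hu
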